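/- For every element l of the free Lie algebra L ⊂ ℝ⟨x,y⟩, one has ∂_x(l) = ad_{∂_x^L(l)}(1⊗1), i.e., the full noncommutative partial derivative of a Lie element is obtained by the adjoint action of ∂_x^L(l) on 1⊗1 in the bimodule A⊗A. -/

import Mathlib

/-!
`∂ = ∂_d` is a derivation of `A` into the bimodule `A ⊗ A`, and `id ⊗ ε` is left `A`-linear
and turns right multiplication by `b` into scaling by `ε b`; hence
`∂^L (a b) = a ∂^L b + ε(b) ∂^L a`. The counit kills Lie elements, so on them
`∂^L [a, b] = a ∂^L b - b ∂^L a`. On Lie elements `ad` is the commutator action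
`m ↦ a m - m a`, since both are Lie homomorphisms agreeing on `x, y`. Induction over brackets
then gives `∂ [a, b] = ad_a (∂ b) - ad_b (∂ a) = ad_{∂^L [a, b]} (1 ⊗ 1)`.
-/

noncomputable section
open TensorProduct

abbrev A : Type := FreeAlgebra ℝ (Fin 2)
abbrev B : Type := A ⊗[ℝ] A

def X : A := FreeAlgebra.ι ℝ 0
def Y : A := FreeAlgebra.ι ℝ 1

/-- Generator matrices used to define the noncommutative partial derivative `pd d`. -/
def genMat (d i : Fin 2) : Matrix (Fin 2) (Fin 2) B :=
  !![(Algebra.TensorProduct.includeLeft : A →ₐ[ℝ] B) (FreeAlgebra.ι ℝ i), if i = d then 1 else 0;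
     0, Algebra.TensorProduct.includeRight (FreeAlgebra.ι ℝ i)]

def Φmat (d : Fin 2) : A →ₐ[ℝ] Matrix (Fin 2) (Fin 2) B :=
  FreeAlgebra.lift ℝ (genMat d)

/-- The noncommutative partial derivative `∂_x` (for `d = 0`) resp. `∂_y` (for `d = 1`):
on a monomial it splits the word at each occurrence of the letter `d`. -/
def pd (d : Fin 2) (a : A) : B := Φmat d a 0 1

/-- The counit `ε : A → ℝ`, picking out the constant term (`x, y ↦ 0`). -/
def εR : A →ₐ[ℝ] ℝ := FreeAlgebra.lift ℝ (fun _ => (0 : ℝ))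

/-- The Lie partial derivative `∂^L = (id ⊗ ε) ∘ ∂ : A → A`. -/
def pdL (d : Fin 2) (a : A) : A :=
  TensorProduct.rid ℝ A (LinearMap.lTensor A εR.toLinearMap (pd d a))

attribute [local instance 100] LieRing.ofAssociativeRing

/-- The free Lie algebra `L ⊂ A`: the smallest Lie subalgebra of `A` (with bracket
`[a,b] = ab − ba`) containing `x` and `y`. -/
def L : LieSubalgebra ℝ A := LieSubalgebra.lieSpan ℝ A {X, Y}

/-- The adjoint action of `A` on the bimodule `A ⊗ A`, defined on generators by
`ad_z(m) = z·m − m·z` (i.e. `(z⊗1)·m − m·(1⊗z)`) and extended by `ad_{za} = ad_z ∘ ad_a`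
and linearity; formally, the algebra map `A → End(A ⊗ A)` sending a generator `z` to
left multiplication by `z⊗1` minus right multiplication by `1⊗z`. -/
def adA : A →ₐ[ℝ] Module.End ℝ B :=
  FreeAlgebra.lift ℝ (fun i =>
    LinearMap.mulLeft ℝ ((Algebra.TensorProduct.includeLeft : A →ₐ[ℝ] B) (FreeAlgebra.ι ℝ i))
      - LinearMap.mulRight ℝ (Algebra.TensorProduct.includeRight (FreeAlgebra.ι ℝ i)))

theorem LieHom.eqOn_lieSpan {R 𝔤 𝔥 : Type*} [CommRing R] [LieRing 𝔤] [LieAlgebra R 𝔤]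
    [LieRing 𝔥] [LieAlgebra R 𝔥] {f g : 𝔤 →ₗ⁅R⁆ 𝔥} {s : Set 𝔤} (h : Set.EqOn f g s) :
    Set.EqOn f g (LieSubalgebra.lieSpan R 𝔤 s) := by
  intro x hx
  induction hx using LieSubalgebra.lieSpan_induction with
  | mem x hx => exact h hx
  | zero => simp
  | add x y _ _ hx hy => simp [hx, hy]
  | smul r x _ hx => simp [hx]
  | lie x y _ _ hx hy => simp [hx, hy]

section BimoduleAd

variable {R S T : Type*} [CommRing R] [Ring S] [Algebra R S] [Ring T] [Algebra R T]

def bimoduleAd (φ ψ : S →ₐ[R] T) : S →ₗ⁅R⁆ Module.End R T where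
  toFun a := LinearMap.mulLeft R (φ a) - LinearMap.mulRight R (ψ a)
  map_add' a b := by ext m; simp [add_mul, mul_add]; abel
  map_smul' r a := by ext m; simp [smul_sub]
  map_lie' {a b} := by
    ext m
    simp only [Ring.lie_def, map_sub, map_mul, LinearMap.sub_apply, Module.End.mul_apply,
      LinearMap.mulLeft_apply, LinearMap.mulRight_apply]
    noncomm_ring

theorem bimoduleAd_apply (φ ψ : S →ₐ[R] T) (a : S) (m : T) :
    bimoduleAd φ ψ a m = φ a * m - m * ψ a := rfl

end BimoduleAd

local notation "incL" => (Algebra.TensorProduct.includeLeft : A →ₐ[ℝ] B)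
local notation "incR" => (Algebra.TensorProduct.includeRight : A →ₐ[ℝ] B)

theorem εR_eq_zero_of_mem_L {l : A} (hl : l ∈ L) : εR l = 0 := by
  refine LieHom.eqOn_lieSpan (f := εR.toLieHom) (g := 0) ?_ hl
  rintro _ (rfl | rfl) <;> simp [X, Y, εR]

theorem adA_apply_of_mem_L {l : A} (hl : l ∈ L) (m : B) :
    adA l m = incL l * m - m * incR l := by
  have : adA l = bimoduleAd incL incR l := by
    refine LieHom.eqOn_lieSpan (f := adA.toLieHom) (g := bimoduleAd incL incR) ?_ hl
    rintro _ (rfl | rfl) <;> simp [X, Y, adA, bimoduleAd]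
  rw [this, bimoduleAd_apply]

section PartialDerivative

variable (d : Fin 2)

theorem Φmat_eq (a : A) : Φmat d a = !![incL a, pd d a; 0, incR a] := by
  suffices Φmat d a 0 0 = incL a ∧ Φmat d a 1 0 = 0 ∧ Φmat d a 1 1 = incR a by
    ext i j; fin_cases i <;> fin_cases j <;> simp [this, pd]
  induction a using FreeAlgebra.induction with
  | grade0 r =>
    simp [Φmat, Algebra.algebraMap_eq_smul_one, Algebra.TensorProduct.one_def]
  | grade1 i => simp [Φmat, genMat]
  | mul a b ha hb => simp [Matrix.mul_apply, Fin.sum_univ_two, ha, hb]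
  | add a b ha hb => simp [ha, hb, TensorProduct.add_tmul, TensorProduct.tmul_add]

theorem pd_mul (a b : A) : pd d (a * b) = incL a * pd d b + pd d a * incR b := by
  rw [pd, map_mul, Φmat_eq, Φmat_eq]
  simp [Matrix.mul_apply, Fin.sum_univ_two]

theorem pd_ι (i : Fin 2) : pd d (FreeAlgebra.ι ℝ i) = if i = d then 1 else 0 := by
  simp [pd, Φmat, genMat]

@[simp] theorem pd_zero : pd d 0 = 0 := by simp [pd]

@[simp] theorem pd_add (a b : A) : pd d (a + b) = pd d a + pd d b := by simp [pd]

@[simp] theorem pd_sub (a b : A) : pd d (a - b) = pd d a - pd d b := by simp [pd]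

@[simp] theorem pd_smul (r : ℝ) (a : A) : pd d (r • a) = r • pd d a := by simp [pd]

theorem pd_lie (a b : A) :
    pd d ⁅a, b⁆ = incL a * pd d b + pd d a * incR b - (incL b * pd d a + pd d b * incR a) := by
  rw [Ring.lie_def, pd_sub, pd_mul, pd_mul]

def idTensorCounit : B →ₗ[ℝ] A :=
  (TensorProduct.rid ℝ A).toLinearMap ∘ₗ LinearMap.lTensor A εR.toLinearMap

theorem pdL_eq (a : A) : pdL d a = idTensorCounit (pd d a) := rfl

theorem idTensorCounit_includeLeft_mul (a : A) (m : B) :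
    idTensorCounit (incL a * m) = a * idTensorCounit m := by
  induction m using TensorProduct.induction_on with
  | zero => simp
  | tmul u v => simp [idTensorCounit, Algebra.TensorProduct.tmul_mul_tmul]
  | add u v hu hv => rw [mul_add, map_add, hu, hv, map_add, mul_add]

theorem idTensorCounit_mul_includeRight (b : A) (m : B) :
    idTensorCounit (m * incR b) = εR b • idTensorCounit m := by
  induction m using TensorProduct.induction_on with
  | zero => simp
  | tmul u v => simp [idTensorCounit, Algebra.TensorProduct.tmul_mul_tmul, mul_comm, smul_smul]
  | add u v hu hv => rw [add_mul, map_add, hu, hv, map_add, smul_add]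

theorem pdL_mul (a b : A) : pdL d (a * b) = a * pdL d b + εR b • pdL d a := by
  rw [pdL_eq, pd_mul, map_add, idTensorCounit_includeLeft_mul,
    idTensorCounit_mul_includeRight, pdL_eq, pdL_eq]

@[simp] theorem pdL_zero : pdL d 0 = 0 := by simp [pdL_eq]

@[simp] theorem pdL_add (a b : A) : pdL d (a + b) = pdL d a + pdL d b := by
  simp [pdL_eq]

@[simp] theorem pdL_smul (r : ℝ) (a : A) : pdL d (r • a) = r • pdL d a := by
  simp [pdL_eq]

theorem pdL_lie {a b : A} (ha : εR a = 0) (hb : εR b = 0) :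
    pdL d ⁅a, b⁆ = a * pdL d b - b * pdL d a := by
  rw [Ring.lie_def, pdL_eq, pd_sub, map_sub, ← pdL_eq, ← pdL_eq, pdL_mul, pdL_mul, ha, hb]
  simp

theorem pdL_ι (i : Fin 2) : pdL d (FreeAlgebra.ι ℝ i) = if i = d then 1 else 0 := by
  split_ifs with h <;> simp [pdL_eq, pd_ι, h, idTensorCounit, Algebra.TensorProduct.one_def]

theorem pd_eq_adA_pdL {l : A} (hl : l ∈ L) : pd d l = adA (pdL d l) 1 := by
  induction hl using LieSubalgebra.lieSpan_induction with
  | mem x hx =>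
    obtain ⟨i, rfl⟩ : ∃ i, x = FreeAlgebra.ι ℝ i := by rcases hx with rfl | rfl <;> exact ⟨_, rfl⟩
    rw [pd_ι, pdL_ι]
    split_ifs <;> simp
  | zero => simp
  | add x y _ _ hx hy => simp [hx, hy]
  | smul r x _ hx => simp [hx]
  | lie x y hxL hyL hx hy =>
    rw [pd_lie, pdL_lie d (εR_eq_zero_of_mem_L hxL) (εR_eq_zero_of_mem_L hyL), map_sub, map_mul,
      map_mul, LinearMap.sub_apply, Module.End.mul_apply, Module.End.mul_apply, ← hx, ← hy,
      adA_apply_of_mem_L hxL, adA_apply_of_mem_L hyL]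
    abel

end PartialDerivative

/-- For every Lie element `l ∈ L`, `∂_x(l) = ad_{∂_x^L(l)}(1 ⊗ 1)`. -/
theorem pd_eq_ad_of_lie (l : A) (hl : l ∈ L) :
    pd 0 l = adA (pdL 0 l) 1 :=
  pd_eq_adA_pdL 0 hl
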